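/- (Monotonicity and limit of the isoperimetric-type ratio.) Let n ≥ 2 be an integer and define ψ(r) = (n σ_n ∫_0^r sinh(s)^{n−1} ds) / sinh(r)^{n−1} for r > 0. Then ψ is strictly increasing on (0,∞), ψ(r) < n σ_n/(n−1) for every r > 0, and ψ(r) → n σ_n/(n−1) as r → ∞. Equivalently, with F the inverse of the volume function, the function φ(t) = t/sinh(F(t))^{n−1} is strictly increasing on (0,∞) with limit n σ_n/(n−1) at infinity and φ(t) < n σ_n/(n−1) for all t > 0. -/

import Mathlib

open MeasureTheory Real Set Filter
open scoped ENNReal NNReal BigOperators RealInnerProductSpace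

noncomputable section

/-- Decreasing rearrangement of `u` with respect to the measure `μ`:
`u*(t) = inf {s > 0 : μ({|u| > s}) ≤ t}`. -/
def rearr {α : Type*} [MeasurableSpace α] (μ : Measure α) (u : α → ℝ) (t : ℝ) : ℝ :=
  sInf {s : ℝ | 0 < s ∧ μ {x | s < |u x|} ≤ ENNReal.ofReal t}

/-- Lorentz quasinorm `‖u‖_{p,q} = (∫_0^∞ (t^{1/p} u*(t))^q dt/t)^{1/q}`. -/
def lorentzNorm {α : Type*} [MeasurableSpace α] (μ : Measure α) (p q : ℝ) (u : α → ℝ) : ℝ :=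
  (∫ t in Ioi (0:ℝ), (t ^ (1/p) * rearr μ u t) ^ q / t) ^ (1/q)

/-- Hyperbolic volume measure `dV_g = (2/(1-|x|²))ⁿ dx` on the Poincaré ball model. -/
def hypVolume (n : ℕ) : Measure (EuclideanSpace ℝ (Fin n)) :=
  ((volume : Measure (EuclideanSpace ℝ (Fin n))).restrict
      (Metric.ball (0 : EuclideanSpace ℝ (Fin n)) 1)).withDensity
    (fun x => ENNReal.ofReal ((2 / (1 - ‖x‖ ^ 2)) ^ n))

/-- Euclidean Laplacian `Δu = ∑ᵢ ∂²u/∂xᵢ²`. -/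
def eLap {n : ℕ} (u : EuclideanSpace ℝ (Fin n) → ℝ) (x : EuclideanSpace ℝ (Fin n)) : ℝ :=
  ∑ i : Fin n, fderiv ℝ (fun y => fderiv ℝ u y (EuclideanSpace.single i 1)) x
    (EuclideanSpace.single i 1)

/-- Hyperbolic Laplace–Beltrami operator on the Poincaré ball:
`Δ_g u(x) = ((1-|x|²)/2)² Δu(x) + (n-2)((1-|x|²)/2)⟨x, ∇u(x)⟩`. -/
def hypLap {n : ℕ} (u : EuclideanSpace ℝ (Fin n) → ℝ) : EuclideanSpace ℝ (Fin n) → ℝ :=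
  fun x => ((1 - ‖x‖ ^ 2) / 2) ^ 2 * eLap u x
    + ((n : ℝ) - 2) * ((1 - ‖x‖ ^ 2) / 2) * ⟪x, gradient u x⟫

/-- Length of the hyperbolic gradient: `|∇_g u|(x) = ((1-|x|²)/2)|∇u(x)|`. -/
def hypGradLen {n : ℕ} (u : EuclideanSpace ℝ (Fin n) → ℝ) (x : EuclideanSpace ℝ (Fin n)) : ℝ :=
  ((1 - ‖x‖ ^ 2) / 2) * ‖gradient u x‖

/-- Smooth functions compactly supported in the open unit ball. -/
def IsTestFun {n : ℕ} (u : EuclideanSpace ℝ (Fin n) → ℝ) : Prop :=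
  ContDiff ℝ (⊤ : ℕ∞) u ∧ HasCompactSupport u ∧
    tsupport u ⊆ Metric.ball (0 : EuclideanSpace ℝ (Fin n)) 1

/-- Volume `σ_θ = π^{θ/2}/Γ(θ/2+1)` of the unit ball in "dimension" `θ`. -/
def sigmaVol (θ : ℝ) : ℝ := Real.pi ^ (θ / 2) / Real.Gamma (θ / 2 + 1)

/-- `j_{a,q} = min{j ∈ ℕ : j > 1 + a(q-1)/q}`. -/
def jexp (a q : ℝ) : ℕ := sInf {j : ℕ | 1 + a * (q - 1) / q < (j : ℝ)}

/-- Truncated exponential `Φ_{a,q}(t) = e^t - ∑_{j=0}^{j_{a,q}-2} t^j/j!`. -/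
def PhiAQ (a q t : ℝ) : ℝ :=
  Real.exp t - ∑ j ∈ Finset.range (jexp a q - 1), t ^ j / (Nat.factorial j : ℝ)

/-- Sharp Adams constant `β_{n,m}` for `m` even. -/
def betaEven (n m : ℕ) : ℝ :=
  Real.pi ^ ((n : ℝ) / 2) * 2 ^ (m : ℝ) * Real.Gamma ((m : ℝ) / 2) /
    (sigmaVol n ^ (((n : ℝ) - m) / n) * Real.Gamma (((n : ℝ) - m) / 2))

/-- Sharp Adams constant `β_{n,m}` for `m` odd. -/
def betaOdd (n m : ℕ) : ℝ :=
  Real.pi ^ ((n : ℝ) / 2) * 2 ^ (m : ℝ) * Real.Gamma (((m : ℝ) + 1) / 2) /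
    (sigmaVol n ^ (((n : ℝ) - m) / n) * Real.Gamma (((n : ℝ) - m + 1) / 2))

/-- Sharp Lorentz–Poincaré constant `C(n,m,p) = ((n-1)²/(p p'))^{m/2}` for `m = 2k` even. -/
def pconstEven (n k : ℕ) (p : ℝ) : ℝ := (((n : ℝ) - 1) ^ 2 / (p * (p / (p - 1)))) ^ k

/-- Sharp Lorentz–Poincaré constant `C(n,m,p) = ((n-1)/p)((n-1)²/(p p'))^{(m-1)/2}`
for `m = 2k+1` odd. -/
def pconstOdd (n k : ℕ) (p : ℝ) : ℝ :=
  (((n : ℝ) - 1) / p) * ((((n : ℝ) - 1) ^ 2 / (p * (p / (p - 1)))) ^ k)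

/-- The measure `λ_θ` on `(0,∞)` with density `θ σ_θ x^{θ-1}`. -/
def lamMeasure (θ : ℝ) : Measure ℝ :=
  (volume.restrict (Ioi (0:ℝ))).withDensity
    (fun x => ENNReal.ofReal (θ * sigmaVol θ * x ^ (θ - 1)))

/-- `μ_{q,1} = (q σ_q)^{1/(q-1)}`. -/
def muQ1 (q : ℝ) : ℝ := (q * sigmaVol q) ^ (1 / (q - 1))

/-! Write `I(r) = ∫₀ʳ sinh^(m+1)` and `S(r) = sinh^(m+1) r`, so that `ψ = n σ_n I / S` with
`m + 1 = n - 1`. Since `S' = (m + 1) sinh^m cosh` and `cosh = sinh + exp (-s)`,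
`S - (m + 1) I = (m + 1) ∫₀ʳ sinh^m(s) exp (-s) ds`, which is positive and at most
`(m + 1) sinh^m r`; this squeezes `I / S` between `1/(m+1) - 1/sinh r` and `1/(m+1)`.
The sign of `(I / S)'` is that of `sinh^(m+2) - (m + 1) cosh · I`, which vanishes at `0` and
increases because `S > (m + 1) I` and `cosh > sinh`. -/

theorem sigmaVol_pos {θ : ℝ} (hθ : -2 < θ) : 0 < sigmaVol θ :=
  div_pos (rpow_pos_of_pos pi_pos _) (Gamma_pos_of_pos (by linarith))

def sinhPowRatio (m : ℕ) (r : ℝ) : ℝ := (∫ s in (0:ℝ)..r, sinh s ^ m) / sinh r ^ m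

section SinhPow

variable (m : ℕ)

theorem integral_sinh_pow_mul_cosh (a b : ℝ) :
    ∫ s in a..b, sinh s ^ m * cosh s = (sinh b ^ (m + 1) - sinh a ^ (m + 1)) / (m + 1) := by
  have := intervalIntegral.integral_comp_mul_deriv (a := a) (b := b) (g := fun x => x ^ m)
    (fun x _ => hasDerivAt_sinh x) continuous_cosh.continuousOn (continuous_pow m)
  simpa only [Function.comp_def, integral_pow] using this

theorem hasDerivAt_integral_sinh_pow (r : ℝ) :
    HasDerivAt (fun u => ∫ s in (0:ℝ)..u, sinh s ^ m) (sinh r ^ m) r :=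
  intervalIntegral.integral_hasDerivAt_right ((by fun_prop : Continuous _).intervalIntegrable _ _)
    ((by fun_prop : Continuous _).stronglyMeasurableAtFilter _ _) (by fun_prop)

theorem sinh_pow_succ_sub_mul_integral (r : ℝ) :
    sinh r ^ (m + 1) - (m + 1) * ∫ s in (0:ℝ)..r, sinh s ^ (m + 1) =
      (m + 1) * ∫ s in (0:ℝ)..r, sinh s ^ m * exp (-s) := by
  have hcosh : ∫ s in (0:ℝ)..r, sinh s ^ m * cosh s =
      (∫ s in (0:ℝ)..r, sinh s ^ (m + 1)) + ∫ s in (0:ℝ)..r, sinh s ^ m * exp (-s) := by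
    rw [← intervalIntegral.integral_add ((by fun_prop : Continuous _).intervalIntegrable _ _)
      ((by fun_prop : Continuous _).intervalIntegrable _ _)]
    congr 1 with s
    rw [← cosh_sub_sinh]; ring
  rw [integral_sinh_pow_mul_cosh, sinh_zero, zero_pow m.succ_ne_zero, sub_zero] at hcosh
  have : (m + 1 : ℝ) ≠ 0 := by positivity
  field_simp at hcosh
  linear_combination hcosh

theorem integral_sinh_pow_mul_exp_neg_pos {r : ℝ} (hr : 0 < r) :
    0 < ∫ s in (0:ℝ)..r, sinh s ^ m * exp (-s) :=
  intervalIntegral.intervalIntegral_pos_of_pos_on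
    ((by fun_prop : Continuous _).intervalIntegrable _ _)
    (fun s hs => mul_pos (pow_pos (sinh_pos_iff.mpr hs.1) m) (exp_pos _)) hr

theorem integral_sinh_pow_mul_exp_neg_le {r : ℝ} (hr : 0 ≤ r) :
    ∫ s in (0:ℝ)..r, sinh s ^ m * exp (-s) ≤ sinh r ^ m := by
  have hexp : ∫ s in (0:ℝ)..r, exp (-s) = 1 - exp (-r) := by
    rw [intervalIntegral.integral_comp_neg, integral_exp, neg_zero, exp_zero]
  calc ∫ s in (0:ℝ)..r, sinh s ^ m * exp (-s)
      ≤ ∫ s in (0:ℝ)..r, sinh r ^ m * exp (-s) := by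
        refine intervalIntegral.integral_mono_on hr
          ((by fun_prop : Continuous _).intervalIntegrable _ _)
          ((by fun_prop : Continuous _).intervalIntegrable _ _) fun s hs => ?_
        gcongr
        · exact sinh_nonneg_iff.mpr hs.1
        · exact sinh_le_sinh.mpr hs.2
    _ = sinh r ^ m * (1 - exp (-r)) := by rw [intervalIntegral.integral_const_mul, hexp]
    _ ≤ sinh r ^ m := by
        have : 0 ≤ sinh r ^ m := pow_nonneg (sinh_nonneg_iff.mpr hr) m
        nlinarith [exp_pos (-r)]

theorem mul_integral_sinh_pow_lt {r : ℝ} (hr : 0 < r) :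
    (m + 1) * ∫ s in (0:ℝ)..r, sinh s ^ (m + 1) < sinh r ^ (m + 1) := by
  nlinarith [sinh_pow_succ_sub_mul_integral m r, integral_sinh_pow_mul_exp_neg_pos m hr]

theorem sinh_pow_le_mul_integral_add {r : ℝ} (hr : 0 ≤ r) :
    sinh r ^ (m + 1) ≤ (m + 1) * ((∫ s in (0:ℝ)..r, sinh s ^ (m + 1)) + sinh r ^ m) := by
  nlinarith [sinh_pow_succ_sub_mul_integral m r, integral_sinh_pow_mul_exp_neg_le m hr]

theorem mul_cosh_mul_integral_sinh_pow_lt {r : ℝ} (hr : 0 < r) :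
    (m + 1) * cosh r * ∫ s in (0:ℝ)..r, sinh s ^ (m + 1) < sinh r ^ (m + 2) := by
  set I : ℝ → ℝ := fun u => ∫ s in (0:ℝ)..u, sinh s ^ (m + 1)
  let k : ℝ → ℝ := fun u => sinh u ^ (m + 2) - (m + 1) * cosh u * I u
  have hk : ∀ u, HasDerivAt k (cosh u * sinh u ^ (m + 1) - (m + 1) * sinh u * I u) u := by
    intro u
    refine (((hasDerivAt_sinh u).fun_pow (m + 2)).fun_sub
      (((hasDerivAt_cosh u).const_mul ((m : ℝ) + 1)).fun_mul
        (hasDerivAt_integral_sinh_pow (m + 1) u))).congr_deriv ?_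
    rw [show m + 2 - 1 = m + 1 from rfl]
    push_cast; ring
  have hk_mono : StrictMonoOn k (Ici 0) := by
    refine strictMonoOn_of_deriv_pos (convex_Ici 0)
      (fun u _ => (hk u).continuousAt.continuousWithinAt) fun u hu => ?_
    rw [interior_Ici] at hu
    rw [(hk u).deriv]
    have hsinh_pow : 0 < sinh u ^ (m + 1) := pow_pos (sinh_pos_iff.mpr hu) _
    nlinarith [sinh_lt_cosh u, sinh_pos_iff.mpr hu, mul_integral_sinh_pow_lt m hu]
  have hk_pos := hk_mono self_mem_Ici hr.le hr
  simp only [k, I, sinh_zero, intervalIntegral.integral_same, zero_pow (Nat.succ_ne_zero _),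
    mul_zero, sub_zero] at hk_pos
  linarith

theorem strictMonoOn_sinhPowRatio : StrictMonoOn (sinhPowRatio (m + 1)) (Ioi 0) := by
  have hderiv : ∀ r ∈ Ioi (0:ℝ), HasDerivAt (sinhPowRatio (m + 1))
      (sinh r ^ m * (sinh r ^ (m + 2) - (m + 1) * cosh r * ∫ s in (0:ℝ)..r, sinh s ^ (m + 1)) /
        (sinh r ^ (m + 1)) ^ 2) r := by
    intro r hr
    have hsinh_pow : sinh r ^ (m + 1) ≠ 0 := pow_ne_zero _ (sinh_pos_iff.mpr hr).ne'
    refine ((hasDerivAt_integral_sinh_pow (m + 1) r).fun_div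
      ((hasDerivAt_sinh r).fun_pow (m + 1)) hsinh_pow).congr_deriv ?_
    rw [show m + 1 - 1 = m from rfl]
    push_cast; ring
  refine strictMonoOn_of_deriv_pos (convex_Ioi 0)
    (fun r hr => (hderiv r hr).continuousAt.continuousWithinAt) fun r hr => ?_
  rw [interior_Ioi] at hr
  rw [(hderiv r hr).deriv]
  have hnum := mul_cosh_mul_integral_sinh_pow_lt m hr
  have hsinh := sinh_pos_iff.mpr hr
  exact div_pos (mul_pos (by positivity) (by linarith)) (by positivity)

theorem sinhPowRatio_lt {r : ℝ} (hr : 0 < r) : sinhPowRatio (m + 1) r < 1 / (m + 1) := by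
  have hsinh := sinh_pos_iff.mpr hr
  rw [sinhPowRatio, div_lt_div_iff₀ (by positivity) (by positivity)]
  linarith [mul_integral_sinh_pow_lt m hr]

theorem tendsto_sinhPowRatio :
    Tendsto (sinhPowRatio (m + 1)) atTop (nhds (1 / (m + 1))) := by
  have hsinh : Tendsto sinh atTop atTop :=
    tendsto_atTop_mono' atTop ((eventually_ge_atTop 0).mono fun r hr => self_le_sinh_iff.mpr hr)
      tendsto_id
  have hlower : Tendsto (fun r => 1 / (m + 1) - 1 / sinh r) atTop (nhds (1 / (m + 1 : ℝ))) := by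
    simpa using tendsto_const_nhds.sub hsinh.inv_tendsto_atTop
  refine tendsto_of_tendsto_of_tendsto_of_le_of_le' hlower tendsto_const_nhds ?_
    ((eventually_gt_atTop 0).mono fun r hr => (sinhPowRatio_lt m hr).le)
  filter_upwards [eventually_gt_atTop 0] with r hr
  have hsinh_pos := sinh_pos_iff.mpr hr
  have hS := sinh_pow_le_mul_integral_add m hr.le
  rw [sinhPowRatio, sub_le_iff_le_add, div_add_div _ _ (by positivity) (by positivity),
    div_le_div_iff₀ (by positivity) (by positivity)]
  rw [pow_succ] at hS ⊢
  nlinarith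

end SinhPow

/-- Monotonicity and limit of the isoperimetric-type ratio
`ψ(r) = (n σ_n ∫_0^r sinh^{n-1})/sinh(r)^{n-1}`. -/
theorem isoperimetric_ratio_mono (n : ℕ) (hn : 2 ≤ n) (ψ : ℝ → ℝ)
    (hψ : ∀ r : ℝ, ψ r =
      ((n : ℝ) * sigmaVol n * ∫ s in (0:ℝ)..r, Real.sinh s ^ (n - 1)) /
        Real.sinh r ^ (n - 1)) :
    StrictMonoOn ψ (Ioi (0:ℝ)) ∧
    (∀ r : ℝ, 0 < r → ψ r < (n : ℝ) * sigmaVol n / ((n : ℝ) - 1)) ∧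
    Tendsto ψ atTop (nhds ((n : ℝ) * sigmaVol n / ((n : ℝ) - 1))) := by
  obtain ⟨m, rfl⟩ : ∃ m, n = m + 2 := ⟨n - 2, by omega⟩
  set c := ((m + 2 : ℕ) : ℝ) * sigmaVol (m + 2 : ℕ)
  have hc : 0 < c :=
    mul_pos (by positivity) (sigmaVol_pos (by linarith [(m + 2).cast_nonneg (α := ℝ)]))
  have hψ_eq : ψ = fun r => c * sinhPowRatio (m + 1) r :=
    funext fun r => by rw [hψ, mul_div_assoc]; rfl
  have hlimit : c / (((m + 2 : ℕ) : ℝ) - 1) = c * (1 / (m + 1)) := by push_cast; ring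
  rw [hlimit, hψ_eq]
  exact ⟨fun a ha b hb hab => mul_lt_mul_of_pos_left (strictMonoOn_sinhPowRatio m ha hb hab) hc,
    fun r hr => mul_lt_mul_of_pos_left (sinhPowRatio_lt m hr) hc,
    (tendsto_sinhPowRatio m).const_mul c⟩
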